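/- Let C = ⊕_{g∈G} C_g be a faithful G-extension of a fusion category D containing a simple object X with 1 < FPdim(X) < 2. Then for every g ∈ G, either C_g contains an invertible simple object, or there exists a simple object Y ∈ C_g of minimal Frobenius-Perron dimension in C_g such that X ⊗ Y is simple. -/

import Mathlib

/-!
Take `Y` of minimal dimension in `C_g`. Since `X` lies in the trivial component, every simple
summand of `X ⊗ Y` lies in `C_g` and so has dimension at least `FPdim Y`. Comparing dimensions,
the number of summands of `X ⊗ Y`, counted with multiplicity, is at most `FPdim X < 2`; it is
nonzero, so `X ⊗ Y` is simple. Thus the second alternative always holds.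
-/

open scoped BigOperators
open Real

/-- A fusion ring: the Grothendieck-ring data of a fusion category, with basis `I`
(the isomorphism classes of simple objects), fusion multiplicities `N`, unit,
duality, and Frobenius–Perron dimensions `d`. -/
structure FusionRing (I : Type) [Fintype I] [DecidableEq I] where
  N : I → I → I → ℕ
  one : I
  dual : I → I
  d : I → ℝ
  d_one : d one = 1
  one_le_d : ∀ i, 1 ≤ d i
  dual_dual : ∀ i, dual (dual i) = i
  d_dual : ∀ i, d (dual i) = d i
  d_mul : ∀ i j, d i * d j = ∑ k, (N i j k : ℝ) * d k
  N_one_left : ∀ i k, N one i k = if k = i then 1 else 0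
  N_one_right : ∀ i k, N i one k = if k = i then 1 else 0
  N_unit : ∀ i j, N i j one = if j = dual i then 1 else 0
  assoc : ∀ i j k l, ∑ m, N i j m * N m k l = ∑ m, N j k m * N i m l

/-- A faithfully `G`-graded fusion ring: the Grothendieck data of a faithful
`G`-extension `C = ⊕_{g ∈ G} C_g` of the fusion category `D = C_e`. -/
structure GradedFusionRing (G : Type) [Group G] [Fintype G] [DecidableEq G]
    (I : Type) [Fintype I] [DecidableEq I] extends FusionRing I where
  deg : I → G
  deg_one : deg one = 1
  deg_mul : ∀ i j k, N i j k ≠ 0 → deg k = deg i * deg j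
  faithful : Function.Surjective deg

theorem Fintype.exists_eq_ite_of_sum_eq_one {ι : Type} [Fintype ι] [DecidableEq ι]
    (f : ι → ℕ) (h : ∑ i, f i = 1) : ∃ a, ∀ m, f m = if m = a then 1 else 0 := by
  obtain ⟨a, ha⟩ := (Finsupp.sum_eq_one_iff (Finsupp.equivFunOnFinite.symm f)).mp <| by
    rwa [Finsupp.sum_fintype _ _ fun _ => rfl]
  refine ⟨a, fun m => ?_⟩
  simpa [Finsupp.single_apply, eq_comm] using DFunLike.congr_fun ha m

namespace FusionRing

variable {I : Type} [Fintype I] [DecidableEq I] (R : FusionRing I)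

theorem d_pos (i : I) : 0 < R.d i := one_pos.trans_le (R.one_le_d i)

theorem sum_N_pos (i j : I) : 0 < ∑ k, R.N i j k := by
  by_contra! h
  have hzero : ∀ k, R.N i j k = 0 := fun k =>
    Finset.sum_eq_zero_iff.mp (Nat.le_zero.mp h) k (Finset.mem_univ k)
  have := R.d_mul i j
  simp only [hzero, Nat.cast_zero, zero_mul, Finset.sum_const_zero] at this
  exact (mul_pos (R.d_pos i) (R.d_pos j)).ne' this

end FusionRing

namespace GradedFusionRing

variable {G I : Type} [Group G] [Fintype G] [DecidableEq G] [Fintype I] [DecidableEq I]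
  (R : GradedFusionRing G I)

def IsMinDimIn (g : G) (Y : I) : Prop :=
  R.deg Y = g ∧ ∀ Y', R.deg Y' = g → R.d Y ≤ R.d Y'

theorem exists_isMinDimIn (g : G) : ∃ Y, R.IsMinDimIn g Y := by
  obtain ⟨y, hy⟩ := R.faithful g
  obtain ⟨Y, hY, hmin⟩ := Finset.exists_min_image {i | R.deg i = g} R.d ⟨y, by simpa using hy⟩
  exact ⟨Y, by simpa using hY, fun Y' hY' => hmin Y' (by simpa using hY')⟩

theorem sum_N_le_d {g : G} {X Y : I} (hX : R.deg X = 1) (hY : R.IsMinDimIn g Y) :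
    (∑ k, R.N X Y k : ℝ) ≤ R.d X := by
  refine le_of_mul_le_mul_right ?_ (R.d_pos Y)
  rw [R.d_mul X Y, Finset.sum_mul]
  refine Finset.sum_le_sum fun k _ => ?_
  by_cases hk : R.N X Y k = 0
  · simp [hk]
  · have hdeg : R.deg k = g := by rw [R.deg_mul X Y k hk, hX, one_mul, hY.1]
    exact mul_le_mul_of_nonneg_left (hY.2 k hdeg) (Nat.cast_nonneg _)

theorem sum_N_eq_one {g : G} {X Y : I} (hX : R.deg X = 1) (hX2 : R.d X < 2)
    (hY : R.IsMinDimIn g Y) : ∑ k, R.N X Y k = 1 := by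
  have hlt : ∑ k, R.N X Y k < 2 := by exact_mod_cast (R.sum_N_le_d hX hY).trans_lt hX2
  have hpos := R.sum_N_pos X Y
  omega

end GradedFusionRing

theorem stmt6_general {G I : Type} [Group G] [Fintype G] [DecidableEq G]
    [Fintype I] [DecidableEq I] (R : GradedFusionRing G I)
    (X : I) (hXdeg : R.deg X = 1) (hX2 : R.d X < 2) :
    ∀ g : G,
      (∃ δ : I, R.deg δ = g ∧ R.d δ = 1) ∨
      (∃ Y : I, R.deg Y = g ∧ (∀ Y' : I, R.deg Y' = g → R.d Y ≤ R.d Y') ∧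
        ∃ Z : I, ∀ m : I, R.N X Y m = if m = Z then 1 else 0) := by
  intro g
  obtain ⟨Y, hY⟩ := R.exists_isMinDimIn g
  exact Or.inr ⟨Y, hY.1, hY.2,
    Fintype.exists_eq_ite_of_sum_eq_one _ (R.sum_N_eq_one hXdeg hX2 hY)⟩

/-- if a faithful `G`-extension `C = ⊕_g C_g` of `D` has a simple object
`X ∈ Irr(D)` with `1 < FPdim X < 2`, then each component `C_g` either contains an
invertible simple object, or contains a simple object `Y` of minimal
Frobenius–Perron dimension in `C_g` such that `X ⊗ Y` is simple. -/
theorem stmt6 {G I : Type} [Group G] [Fintype G] [DecidableEq G]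
    [Fintype I] [DecidableEq I] (R : GradedFusionRing G I)
    (X : I) (hXdeg : R.deg X = 1) (hX1 : 1 < R.d X) (hX2 : R.d X < 2) :
    ∀ g : G,
      (∃ δ : I, R.deg δ = g ∧ R.d δ = 1) ∨
      (∃ Y : I, R.deg Y = g ∧ (∀ Y' : I, R.deg Y' = g → R.d Y ≤ R.d Y') ∧
        ∃ Z : I, ∀ m : I, R.N X Y m = if m = Z then 1 else 0) :=
  stmt6_general R X hXdeg hX2
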